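/- arXiv:math/9310212 — 2 statements merged into one kernel-verified Lean document; each statement's English description precedes it below -/
import Mathlib

section
/- With backward sequences defined as above, the backward sequence of α relative to p_1,…,p_{n+1} has length k+1 ≤ n+1; moreover, for 0 < i ≤ k, the entry α_i lies in the half-open interval (θ_{m_{i+1}-1}, θ_{m_{i+1}}]. -/
/-- `BackSeq T θ N α l` : `l` is the backward sequence of `α` relative to `p_1, …, p_N`,
where `θ i` is the height (minus one) of `p_i` and `T` is the tree ordering `<_T`. -/
inductive BackSeq (T : Ordinal → Ordinal → Prop) (θ : ℕ → Ordinal) :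
    ℕ → Ordinal → List (Ordinal × ℕ) → Prop
  | base (α : Ordinal) : BackSeq T θ 1 α [(α, 1)]
  | step {N : ℕ} (hN : 1 < N) {α β : Ordinal} {m : ℕ} {l : List (Ordinal × ℕ)}
      (hβT : T β α) (h1m : 1 ≤ m) (hmN : m < N) (hβθ : β ≤ θ m)
      (hmax : ∀ γ, T γ α → (∃ m', 1 ≤ m' ∧ m' < N ∧ γ ≤ θ m') → γ ≤ β)
      (hminm : ∀ m', 1 ≤ m' → m' < N → β ≤ θ m' → m ≤ m')
      (hl : BackSeq T θ m β l) :
      BackSeq T θ N α (l ++ [(α, N)])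

theorem backSeq_aux {T : Ordinal → Ordinal → Prop} {θ : ℕ → Ordinal}
    {N : ℕ} {α : Ordinal} {l : List (Ordinal × ℕ)} (hbs : BackSeq T θ N α l) :
      θ (N - 1) < α → α ≤ θ N →
      l.length ≤ N ∧
      ∀ (i : ℕ) (h : i < l.length), 0 < i →
        θ ((l.get ⟨i, h⟩).2 - 1) < (l.get ⟨i, h⟩).1 ∧ (l.get ⟨i, h⟩).1 ≤ θ (l.get ⟨i, h⟩).2 := by
  induction hbs with
  | base α =>
    intro _ _
    exact ⟨le_refl 1, by intro i h hi; simp at h; omega⟩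
  | @step N hN α β m l hβT h1m hmN hβθ hmax hminm hl ih =>
    intro hα1 hα2
    have hbase : l.length ≤ m ∧
        ∀ (i : ℕ) (h : i < l.length), 0 < i →
          θ ((l.get ⟨i, h⟩).2 - 1) < (l.get ⟨i, h⟩).1 ∧ (l.get ⟨i, h⟩).1 ≤ θ (l.get ⟨i, h⟩).2 := by
      rcases Nat.eq_or_lt_of_le h1m with hm1 | hm2
      · cases hl with
        | base => exact ⟨by simp, by intro i h hi; simp at h; omega⟩
        | step hN' => omega
      · have hβ1 : θ (m - 1) < β := by
          by_contra hc
          push_neg at hc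
          have := hminm (m - 1) (by omega) (by omega) hc
          omega
        exact ih hβ1 hβθ
    obtain ⟨hlen, hprop⟩ := hbase
    constructor
    · simp; omega
    · intro i h hi
      have h' : i < l.length + 1 := by simpa using h
      rcases Nat.lt_or_ge i l.length with hil | hil
      · have : (l ++ [(α, N)]).get ⟨i, h⟩ = l.get ⟨i, hil⟩ := by
          simp [List.get_eq_getElem, List.getElem_append_left hil]
        rw [this]
        exact hprop i hil hi
      · have hie : i = l.length := by omega
        have : (l ++ [(α, N)]).get ⟨i, h⟩ = (α, N) := by
          subst hie
          simp
        rw [this]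
        exact ⟨hα1, hα2⟩

/-- The backward sequence of `α` relative to `p_1,…,p_{n+1}` has length `k+1 ≤ n+1`,
and for `0 < i ≤ k` the entry `α_i` lies in the interval `(θ_{m_{i+1}-1}, θ_{m_{i+1}}]`. -/
theorem backSeq_length_le_and_intervals {T : Ordinal → Ordinal → Prop} {θ : ℕ → Ordinal} {n : ℕ}
    -- `<_T` is a tree ordering on the ordinals `≤ θ (n+1)`, rooted at `0`:
    (hsub : ∀ β γ, T β γ → β < γ)
    (htrans : ∀ a b c, T a b → T b c → T a c)
    (hwf : WellFounded T)
    (hlin : ∀ a b c, T a c → T b c → T a b ∨ a = b ∨ T b a)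
    (hfin : ∀ a, {b | T b a}.Finite)
    (hroot : ∀ a, 0 < a → a ≤ θ (n + 1) → T 0 a)
    -- the blocks `{β : β ≤ θ i}` are `<_T`-downward closed:
    (hdc : ∀ i, 1 ≤ i → i ≤ n + 1 → ∀ β γ, T β γ → γ ≤ θ i → β ≤ θ i)
    -- the heights are strictly increasing and `θ 0 = 0`:
    (hθ0 : θ 0 = 0)
    (hθ : ∀ i j, 1 ≤ i → i < j → j ≤ n + 1 → θ i < θ j)
    : ∀ α : Ordinal, θ n < α → α ≤ θ (n + 1) →
      ∀ l : List (Ordinal × ℕ), BackSeq T θ (n + 1) α l →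
        l.length ≤ n + 1 ∧
        ∀ (i : ℕ) (h : i < l.length), 0 < i →
          θ ((l.get ⟨i, h⟩).2 - 1) < (l.get ⟨i, h⟩).1 ∧ (l.get ⟨i, h⟩).1 ≤ θ (l.get ⟨i, h⟩).2 := by
  intro α hα1 hα2 l hbs
  exact backSeq_aux hbs (by simpa using hα1) hα2
end

section
/- Backward sequences are coherent under passing to the selected subsequence: if ⟨(α_0,m_1),…,(α_k,m_{k+1})⟩ is the backward sequence of α relative to p_1,…,p_{n+1}, and we set p̄_i = p_{m_i} for 1 ≤ i ≤ k+1, then the backward sequence of α relative to p̄_1,…,p̄_{k+1} is ⟨(α_0,1),(α_1,2),…,(α_k,k+1)⟩. -/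
lemma BackSeq.struct {T : Ordinal → Ordinal → Prop} {θ : ℕ → Ordinal}
    {N : ℕ} {α : Ordinal} {l : List (Ordinal × ℕ)} (h : BackSeq T θ N α l) :
    0 < l.length ∧ (∀ h' : l.length - 1 < l.length, l[l.length - 1] = (α, N)) ∧
    (∀ i (hi : i < l.length), 1 ≤ l[i].2 ∧ l[i].2 ≤ N) ∧
    (∀ i j (hi : i < l.length) (hj : j < l.length), i < j → l[i].2 < l[j].2) := by
  induction h with
  | base α =>
    refine ⟨by simp, by simp, ?_, ?_⟩
    · intro i hi
      simp at hi
      subst hi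
      simp
    · intro i j hi hj hij
      simp at hi hj
      omega
  | @step N hN α β m l hβT h1m hmN hβθ hmax hminm hl ih =>
    obtain ⟨hpos, hlast, hbd, hmono⟩ := ih
    have hlen : (l ++ [(α, N)]).length = l.length + 1 := by simp
    have hlastl : l[l.length - 1]'(by omega) = (β, m) := hlast (by omega)
    have hle : ∀ i (hi : i < l.length), l[i].2 ≤ m := by
      intro i hi
      rcases Nat.lt_or_ge i (l.length - 1) with h' | h'
      · have := hmono i (l.length - 1) hi (by omega) h'
        rw [hlastl] at this
        omega
      · have : i = l.length - 1 := by omega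
        subst this
        rw [hlastl]
    have hget : ∀ i (hi : i < l.length) (hi' : i < (l ++ [(α, N)]).length),
        (l ++ [(α, N)])[i] = l[i] := fun i hi hi' => List.getElem_append_left hi
    have hgetN : ∀ (hi : l.length < (l ++ [(α, N)]).length),
        (l ++ [(α, N)])[l.length] = (α, N) := by
      intro hi
      rw [List.getElem_append_right (le_refl _)]
      simp
    refine ⟨by simp, ?_, ?_, ?_⟩
    · intro h'
      simp only [List.length_append, List.length_singleton, Nat.add_sub_cancel]
      exact hgetN (by simp)
    · intro i hi
      rw [hlen] at hi
      rcases Nat.lt_or_ge i l.length with h' | h'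
      · rw [hget i h' _]
        have := hbd i h'
        omega
      · have : i = l.length := by omega
        subst this
        rw [hgetN (by simp)]
        omega
    · intro i j hi hj hij
      rw [hlen] at hi hj
      rcases Nat.lt_or_ge j l.length with h' | h'
      · rw [hget i (by omega) _, hget j h' _]
        exact hmono i j (by omega) h' hij
      · have : j = l.length := by omega
        subst this
        rw [hget i (by omega) _, hgetN (by simp)]
        have := hle i (by omega)
        omega

lemma BackSeq.contract {T : Ordinal → Ordinal → Prop} {θ : ℕ → Ordinal}
    {N : ℕ} {α : Ordinal} {l : List (Ordinal × ℕ)} (h : BackSeq T θ N α l) :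
    ∀ m : ℕ → ℕ, (∀ i (hi : i < l.length), m (i + 1) = l[i].2) →
      BackSeq T (fun j => θ (m j)) l.length α
        (List.ofFn fun i : Fin l.length => (l[(i : ℕ)].1, (i : ℕ) + 1)) := by
  induction h with
  | base α =>
    intro m hm
    have : (List.ofFn fun i : Fin ([((α : Ordinal), 1)].length) =>
        (([(α, 1)])[(i : ℕ)].1, (i : ℕ) + 1)) = [(α, 1)] := by
      simp [List.ofFn_succ]
    rw [this]
    exact BackSeq.base α
  | @step N hN α β m l hβT h1m hmN hβθ hmax hminm hl ih =>
    intro mh hmh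
    obtain ⟨hpos, hlast, hbd, hmono⟩ := hl.struct
    have hlastl : l[l.length - 1]'(by omega) = (β, m) := hlast (by omega)
    have hle : ∀ i (hi : i < l.length), l[i].2 ≤ m := by
      intro i hi
      rcases Nat.lt_or_ge i (l.length - 1) with h' | h'
      · have := hmono i (l.length - 1) hi (by omega) h'
        rw [hlastl] at this
        omega
      · have : i = l.length - 1 := by omega
        subst this
        rw [hlastl]
    have hget : ∀ i (hi : i < l.length),
        (l ++ [(α, N)])[i]'(by simp; omega) = l[i] := fun i hi =>
      List.getElem_append_left hi
    -- mh at intermediate positions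
    have hmhl : ∀ i (hi : i < l.length), mh (i + 1) = l[i].2 := by
      intro i hi
      rw [hmh i (by simp; omega), hget i hi]
    have hmhk : mh l.length = m := by
      have := hmhl (l.length - 1) (by omega)
      rw [hlastl] at this
      have e : l.length - 1 + 1 = l.length := by omega
      rw [e] at this
      exact this
    -- rewrite the goal list
    have hlen : (l ++ [(α, N)]).length = l.length + 1 := by simp
    have hofn : (List.ofFn fun i : Fin ((l ++ [(α, N)]).length) =>
        ((l ++ [(α, N)])[(i : ℕ)].1, (i : ℕ) + 1)) =
        (List.ofFn fun i : Fin l.length => (l[(i : ℕ)].1, (i : ℕ) + 1))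
          ++ [(α, l.length + 1)] := by
      apply List.ext_getElem (by simp)
      intro i h1 h2
      simp only [List.getElem_ofFn]
      rcases Nat.lt_or_ge i l.length with h' | h'
      · rw [hget i h', List.getElem_append_left (by simpa using h'),
          List.getElem_ofFn]
      · have hi : i = l.length := by
          simp only [List.length_ofFn, List.length_append, List.length_singleton] at h1
          omega
        subst hi
        rw [List.getElem_append_right (le_refl l.length),
          List.getElem_append_right
            (show (List.ofFn fun i : Fin l.length =>
              (l[(i : ℕ)].1, (i : ℕ) + 1)).length ≤ l.length by simp)]
        simp
    rw [hofn, hlen]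
    refine BackSeq.step (by omega) hβT (by omega) (by omega) ?_ ?_ ?_ (ih mh hmhl)
    · show β ≤ θ (mh l.length)
      rw [hmhk]; exact hβθ
    · intro γ hγ ⟨m', h1, h2, h3⟩
      obtain ⟨j, rfl⟩ : ∃ j, m' = j + 1 := ⟨m' - 1, by omega⟩
      have hj : j < l.length := by omega
      have hv := hmhl j hj
      refine hmax γ hγ ⟨l[j].2, (hbd _ hj).1, ?_, ?_⟩
      · have := hle j hj
        omega
      · rw [← hv]; exact h3
    · intro m' h1 h2 hβ
      by_contra hc
      push_neg at hc
      obtain ⟨j, rfl⟩ : ∃ j, m' = j + 1 := ⟨m' - 1, by omega⟩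
      have hj : j < l.length := by omega
      have hv := hmhl j hj
      rw [hv] at hβ
      have hlt : l[j].2 < m := by
        have := hmono j (l.length - 1) hj (by omega) (by omega)
        rw [hlastl] at this
        exact this
      have := hminm l[j].2 (hbd _ hj).1 (by omega) hβ
      omega

/-- Coherence of backward sequences under passing to the selected subsequence: if
`⟨(α_0,m_1),…,(α_k,m_{k+1})⟩` is the backward sequence of `α` relative to `p_1,…,p_{n+1}`
and `p̄_i = p_{m_i}`, then the backward sequence of `α` relative to `p̄_1,…,p̄_{k+1}` is
`⟨(α_0,1),…,(α_k,k+1)⟩`. -/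
theorem backSeq_contraction_coherence {T : Ordinal → Ordinal → Prop} {θ : ℕ → Ordinal} {n : ℕ}
    -- `<_T` is a tree ordering on the ordinals `≤ θ (n+1)`, rooted at `0`:
    (hsub : ∀ β γ, T β γ → β < γ)
    (htrans : ∀ a b c, T a b → T b c → T a c)
    (hwf : WellFounded T)
    (hlin : ∀ a b c, T a c → T b c → T a b ∨ a = b ∨ T b a)
    (hfin : ∀ a, {b | T b a}.Finite)
    (hroot : ∀ a, 0 < a → a ≤ θ (n + 1) → T 0 a)
    -- the blocks `{β : β ≤ θ i}` are `<_T`-downward closed: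
    (hdc : ∀ i, 1 ≤ i → i ≤ n + 1 → ∀ β γ, T β γ → γ ≤ θ i → β ≤ θ i)
    -- the heights are strictly increasing and `θ 0 = 0`:
    (hθ0 : θ 0 = 0)
    (hθ : ∀ i j, 1 ≤ i → i < j → j ≤ n + 1 → θ i < θ j)
    : ∀ α : Ordinal, θ n < α → α ≤ θ (n + 1) →
      ∀ l : List (Ordinal × ℕ), BackSeq T θ (n + 1) α l →
      ∀ m : ℕ → ℕ, (∀ (i : ℕ) (h : i < l.length), m (i + 1) = (l.get ⟨i, h⟩).2) →
        BackSeq T (fun j => θ (m j)) l.length α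
          (List.ofFn fun i : Fin l.length => ((l.get i).1, (i : ℕ) + 1)) := by
  intro α _ _ l hb m hm
  simpa [List.get_eq_getElem] using hb.contract m (fun i hi => by
    simpa [List.get_eq_getElem] using hm i hi)
end
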